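/- Let G ∈ ℝ^{N×N} be symmetric and positive definite, and let t₀ > 0. Then every trajectory q : [t₀, ∞) → ℝ^N of the NAGD game dynamics q''(t) + (3/t) q'(t) + G q(t) = 0 satisfies q(t) → 0 and q'(t) → 0 as t → ∞. -/

import Mathlib

/-!
Along a trajectory, the Su–Boyd–Candès energy `E(t) = t² ⟨q, G q⟩ + ‖2 q + t q'‖²` satisfies
`E' = -2 t ⟨q, G q⟩ ≤ 0`: the weight `2 = 3 - 1` is chosen so that `(2 q + t q')' = -t G q`,
and symmetry of `G` makes the remaining cross terms cancel. Hence `E(t) ≤ E(t₀)`. Coercivity of `G`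
then bounds `t q(t)`, and the bound on `2 q + t q'` together with `q → 0` bounds `t q'(t)`, so both
`q` and `q'` decay like `1 / t`.
-/

open Filter

/-- NAGD game dynamics: `q` is a twice continuously differentiable trajectory with
velocity `v = q'` satisfying `q'' + (3/t) q' + G q = 0` on `[t₀, ∞)`. -/
def IsNAGDTrajectory {N : ℕ} (G : Matrix (Fin N) (Fin N) ℝ) (t₀ : ℝ)
    (q v : ℝ → Fin N → ℝ) : Prop :=
  (∀ t, t₀ ≤ t → HasDerivAt q (v t) t) ∧
  (∀ t, t₀ ≤ t → HasDerivAt v (-(3 / t) • v t - G.mulVec (q t)) t)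

open Matrix Topology

section Calculus

variable {m n : Type*} [Fintype m] [Fintype n] {f g : ℝ → n → ℝ} {f' g' : n → ℝ} {t : ℝ}

theorem HasDerivAt.dotProduct (hf : HasDerivAt f f' t) (hg : HasDerivAt g g' t) :
    HasDerivAt (fun s => f s ⬝ᵥ g s) (f' ⬝ᵥ g t + f t ⬝ᵥ g') t := by
  have h : HasDerivAt (fun s => ∑ i, f s i * g s i) (∑ i, (f' i * g t i + f t i * g' i)) t :=
    HasDerivAt.fun_sum fun i _ => (hasDerivAt_pi.mp hf i).mul (hasDerivAt_pi.mp hg i)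
  simpa [_root_.dotProduct, Finset.sum_add_distrib] using h

theorem HasDerivAt.mulVec (G : Matrix m n ℝ) (hf : HasDerivAt f f' t) :
    HasDerivAt (fun s => G *ᵥ f s) (G *ᵥ f') t :=
  (G.mulVecLin.toContinuousLinearMap.hasFDerivAt (x := f t)).comp_hasDerivAt t hf

theorem HasDerivAt.dotProduct_mulVec_self {G : Matrix n n ℝ} (hG : Gᵀ = G)
    (hf : HasDerivAt f f' t) :
    HasDerivAt (fun s => f s ⬝ᵥ G *ᵥ f s) (2 * (f' ⬝ᵥ G *ᵥ f t)) t := by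
  refine (hf.dotProduct (hf.mulVec G)).congr_deriv ?_
  rw [dotProduct_mulVec (f t), dotProduct_comm, ← mulVec_transpose, hG]
  ring

end Calculus

section QuadraticForm

variable {n : Type*} [Fintype n]

theorem dotProduct_mulVec_smul_self (G : Matrix n n ℝ) (c : ℝ) (x : n → ℝ) :
    (c • x) ⬝ᵥ G *ᵥ (c • x) = c ^ 2 * (x ⬝ᵥ G *ᵥ x) := by
  rw [mulVec_smul, smul_dotProduct, dotProduct_smul, smul_eq_mul, smul_eq_mul]
  ring

theorem exists_pos_mul_sq_norm_le_dotProduct_mulVec {G : Matrix n n ℝ}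
    (hG : ∀ x : n → ℝ, x ≠ 0 → 0 < x ⬝ᵥ G *ᵥ x) :
    ∃ μ > 0, ∀ x : n → ℝ, μ * ‖x‖ ^ 2 ≤ x ⬝ᵥ G *ᵥ x := by
  cases isEmpty_or_nonempty n
  · exact ⟨1, one_pos, fun x => by simp [Subsingleton.elim x 0]⟩
  have hcont : Continuous fun x : n → ℝ => x ⬝ᵥ G *ᵥ x :=
    continuous_id.dotProduct (G.mulVecLin.toContinuousLinearMap.continuous)
  obtain ⟨u, hu, hmin⟩ := (isCompact_sphere (0 : n → ℝ) 1).exists_isMinOn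
    (NormedSpace.sphere_nonempty.mpr zero_le_one) hcont.continuousOn
  have hu₀ : u ≠ 0 := ne_zero_of_mem_unit_sphere ⟨u, hu⟩
  refine ⟨u ⬝ᵥ G *ᵥ u, hG u hu₀, fun x => ?_⟩
  rcases eq_or_ne x 0 with rfl | hx
  · simp
  have hx' : 0 < ‖x‖ := norm_pos_iff.mpr hx
  have hmem : ‖x‖⁻¹ • x ∈ Metric.sphere (0 : n → ℝ) 1 := by
    simp [norm_smul, hx'.ne']
  have hle : u ⬝ᵥ G *ᵥ u ≤ (‖x‖⁻¹ • x) ⬝ᵥ G *ᵥ (‖x‖⁻¹ • x) := hmin hmem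
  rw [dotProduct_mulVec_smul_self] at hle
  calc u ⬝ᵥ G *ᵥ u * ‖x‖ ^ 2 ≤ (‖x‖⁻¹) ^ 2 * (x ⬝ᵥ G *ᵥ x) * ‖x‖ ^ 2 := by gcongr
    _ = x ⬝ᵥ G *ᵥ x := by field_simp

theorem norm_le_sqrt_dotProduct_self (x : n → ℝ) : ‖x‖ ≤ √(x ⬝ᵥ x) :=
  (pi_norm_le_iff_of_nonneg (Real.sqrt_nonneg _)).mpr fun i =>
    Real.abs_le_sqrt <| by
      simpa [sq, dotProduct] using
        Finset.single_le_sum (f := fun j => x j * x j) (fun j _ => mul_self_nonneg _)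
          (Finset.mem_univ i)

end QuadraticForm

theorem tendsto_zero_of_norm_smul_le {E : Type*} [NormedAddCommGroup E] [NormedSpace ℝ E]
    {f : ℝ → E} {C : ℝ} (h : ∀ᶠ t in atTop, ‖t • f t‖ ≤ C) : Tendsto f atTop (𝓝 0) :=
  tendsto_zero_of_isBoundedUnder_smul_of_tendsto_cobounded (isBoundedUnder_of_eventually_le h)
    (tendsto_id.mono_right IsOrderBornology.atTop_le_cobounded)

def nagdEnergy {N : ℕ} (G : Matrix (Fin N) (Fin N) ℝ) (q v : ℝ → Fin N → ℝ) (t : ℝ) : ℝ :=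
  t ^ 2 * (q t ⬝ᵥ G *ᵥ q t) + ((2 : ℝ) • q t + t • v t) ⬝ᵥ ((2 : ℝ) • q t + t • v t)

namespace IsNAGDTrajectory

variable {N : ℕ} {G : Matrix (Fin N) (Fin N) ℝ} {t₀ t : ℝ} {q v : ℝ → Fin N → ℝ}

theorem hasDerivAt_momentum (h : IsNAGDTrajectory G t₀ q v) (ht₀ : 0 < t₀) (ht : t₀ ≤ t) :
    HasDerivAt (fun s => (2 : ℝ) • q s + s • v s) (-(t • G *ᵥ q t)) t := by
  have ht' : t ≠ 0 := (ht₀.trans_le ht).ne'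
  refine (((h.1 t ht).const_smul (2 : ℝ)).add ((hasDerivAt_id' t).smul (h.2 t ht))).congr_deriv ?_
  ext i
  simp only [Pi.add_apply, Pi.smul_apply, Pi.sub_apply, Pi.neg_apply, smul_eq_mul]
  field_simp
  ring

theorem hasDerivAt_nagdEnergy (hG : Gᵀ = G) (h : IsNAGDTrajectory G t₀ q v) (ht₀ : 0 < t₀)
    (ht : t₀ ≤ t) : HasDerivAt (nagdEnergy G q v) (-(2 * t * (q t ⬝ᵥ G *ᵥ q t))) t := by
  have hw := h.hasDerivAt_momentum ht₀ ht
  refine (((hasDerivAt_pow 2 t).mul ((h.1 t ht).dotProduct_mulVec_self hG)).add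
    (hw.dotProduct hw)).congr_deriv ?_
  simp only [dotProduct_add, add_dotProduct, smul_dotProduct, dotProduct_smul, neg_dotProduct,
    dotProduct_neg, smul_eq_mul, dotProduct_comm (G *ᵥ q t)]
  ring

theorem antitoneOn_nagdEnergy (hG : Gᵀ = G) (hpsd : ∀ x, 0 ≤ x ⬝ᵥ G *ᵥ x)
    (h : IsNAGDTrajectory G t₀ q v) (ht₀ : 0 < t₀) :
    AntitoneOn (nagdEnergy G q v) (Set.Ici t₀) := by
  have hderiv : ∀ t ∈ Set.Ici t₀,
      HasDerivAt (nagdEnergy G q v) (-(2 * t * (q t ⬝ᵥ G *ᵥ q t))) t :=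
    fun t ht => h.hasDerivAt_nagdEnergy hG ht₀ ht
  refine antitoneOn_of_hasDerivWithinAt_nonpos (convex_Ici t₀)
    (fun t ht => (hderiv t ht).continuousAt.continuousWithinAt)
    (fun t ht => (hderiv t (interior_subset ht)).hasDerivWithinAt) fun t ht => ?_
  rw [interior_Ici] at ht
  have := mul_nonneg (mul_nonneg zero_le_two (ht₀.trans ht).le) (hpsd (q t))
  linarith

theorem nagdEnergy_le (hG : Gᵀ = G) (hpsd : ∀ x, 0 ≤ x ⬝ᵥ G *ᵥ x)
    (h : IsNAGDTrajectory G t₀ q v) (ht₀ : 0 < t₀) (ht : t₀ ≤ t) :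
    t ^ 2 * (q t ⬝ᵥ G *ᵥ q t) + ((2 : ℝ) • q t + t • v t) ⬝ᵥ ((2 : ℝ) • q t + t • v t) ≤
      nagdEnergy G q v t₀ :=
  h.antitoneOn_nagdEnergy hG hpsd ht₀ Set.self_mem_Ici ht ht

theorem tendsto_position (hG : Gᵀ = G) (hpd : ∀ x, x ≠ 0 → 0 < x ⬝ᵥ G *ᵥ x)
    (h : IsNAGDTrajectory G t₀ q v) (ht₀ : 0 < t₀) : Tendsto q atTop (𝓝 0) := by
  obtain ⟨μ, hμ, hcoer⟩ := exists_pos_mul_sq_norm_le_dotProduct_mulVec hpd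
  have hpsd : ∀ x, 0 ≤ x ⬝ᵥ G *ᵥ x := fun x => (mul_nonneg hμ.le (sq_nonneg _)).trans (hcoer x)
  refine tendsto_zero_of_norm_smul_le (C := √(nagdEnergy G q v t₀ / μ)) ?_
  filter_upwards [eventually_ge_atTop t₀] with t ht
  have henergy := h.nagdEnergy_le hG hpsd ht₀ ht
  have hmomentum : 0 ≤ ((2 : ℝ) • q t + t • v t) ⬝ᵥ ((2 : ℝ) • q t + t • v t) :=
    Finset.sum_nonneg fun i _ => mul_self_nonneg _
  refine Real.le_sqrt_of_sq_le ?_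
  rw [le_div_iff₀ hμ, norm_smul, mul_pow, Real.norm_eq_abs, sq_abs]
  nlinarith [hcoer (q t), sq_nonneg t]

theorem tendsto_velocity (hG : Gᵀ = G) (hpsd : ∀ x, 0 ≤ x ⬝ᵥ G *ᵥ x)
    (h : IsNAGDTrajectory G t₀ q v) (ht₀ : 0 < t₀) (hq : Tendsto q atTop (𝓝 0)) :
    Tendsto v atTop (𝓝 0) := by
  refine tendsto_zero_of_norm_smul_le (C := √(nagdEnergy G q v t₀) + 2) ?_
  filter_upwards [eventually_ge_atTop t₀,
    (tendsto_zero_iff_norm_tendsto_zero.mp hq).eventually (ge_mem_nhds zero_lt_one)]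
    with t ht hqt
  set w := (2 : ℝ) • q t + t • v t
  have henergy := h.nagdEnergy_le hG hpsd ht₀ ht
  have hw : ‖w‖ ≤ √(nagdEnergy G q v t₀) :=
    (norm_le_sqrt_dotProduct_self w).trans <| Real.sqrt_le_sqrt <| by
      nlinarith [hpsd (q t), sq_nonneg t]
  calc ‖t • v t‖ = ‖w - (2 : ℝ) • q t‖ := by rw [add_sub_cancel_left]
    _ ≤ ‖w‖ + 2 * ‖q t‖ := by simpa [norm_smul] using norm_sub_le w ((2 : ℝ) • q t)
    _ ≤ √(nagdEnergy G q v t₀) + 2 := by linarith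

end IsNAGDTrajectory

/-- for `G` symmetric positive definite, every NAGD trajectory satisfies
`q(t) → 0` and `q'(t) → 0` as `t → ∞`. -/
theorem stmt_9 {N : ℕ} (G : Matrix (Fin N) (Fin N) ℝ) (hsymm : G.transpose = G)
    (hpd : ∀ x : Fin N → ℝ, x ≠ 0 → 0 < dotProduct x (G.mulVec x))
    (t₀ : ℝ) (ht₀ : 0 < t₀)
    (q v : ℝ → Fin N → ℝ) (htraj : IsNAGDTrajectory G t₀ q v) :
    Tendsto q atTop (nhds 0) ∧ Tendsto v atTop (nhds 0) := by
  have hq := htraj.tendsto_position hsymm hpd ht₀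
  have hpsd : ∀ x, 0 ≤ x ⬝ᵥ G *ᵥ x := fun x => by
    rcases eq_or_ne x 0 with rfl | hx
    · simp
    · exact (hpd x hx).le
  exact ⟨hq, htraj.tendsto_velocity hsymm hpsd ht₀ hq⟩
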